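/- If a configuration c of a graph G is not volatile, and c' is obtained from c by removing chips (c'(v) ≤ c(v) for all v), then every legal firing sequence from c' is finite; in particular from c' one reaches a stable configuration after finitely many firings. -/
import Mathlib


variable {V : Type*} [Fintype V] [DecidableEq V]

/-- Firing vertex `v`: remove `deg v` chips from `v`, add one chip to each neighbour. -/
def fire (G : SimpleGraph V) [DecidableRel G.Adj] (c : V → ℕ) (v : V) : V → ℕ :=
  fun u => if u = v then c v - G.degree v else c u + (if G.Adj v u then 1 else 0)

/-- Configuration after firing `f 0, f 1, …, f (m-1)` in order. -/
def fireIter (G : SimpleGraph V) [DecidableRel G.Adj] (c : V → ℕ) (f : ℕ → V) : ℕ → V → ℕ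
  | 0 => c
  | m + 1 => fire G (fireIter G c f m) (f m)

/-- A configuration is volatile if it admits an infinite legal firing sequence. -/
def Volatile (G : SimpleGraph V) [DecidableRel G.Adj] (c : V → ℕ) : Prop :=
  ∃ f : ℕ → V, ∀ m : ℕ, G.degree (f m) ≤ fireIter G c f m (f m)

/-- Configuration after firing a finite list of vertices in order. -/
def fireList (G : SimpleGraph V) [DecidableRel G.Adj] : (V → ℕ) → List V → (V → ℕ)
  | c, [] => c
  | c, v :: l => fireList G (fire G c v) l

/-- A finite firing list is legal if each vertex has at least its degree in chips when fired. -/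
def LegalList (G : SimpleGraph V) [DecidableRel G.Adj] : (V → ℕ) → List V → Prop
  | _, [] => True
  | c, v :: l => G.degree v ≤ c v ∧ LegalList G (fire G c v) l

lemma fire_mono (G : SimpleGraph V) [DecidableRel G.Adj] {c c' : V → ℕ}
    (h : ∀ u, c' u ≤ c u) (v : V) : ∀ u, fire G c' v u ≤ fire G c v u := by
  intro u
  unfold fire
  split
  · exact Nat.sub_le_sub_right (h v) _
  · exact Nat.add_le_add_right (h u) _

lemma fireIter_mono (G : SimpleGraph V) [DecidableRel G.Adj] {c c' : V → ℕ}
    (h : ∀ u, c' u ≤ c u) (f : ℕ → V) :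
    ∀ m u, fireIter G c' f m u ≤ fireIter G c f m u := by
  intro m
  induction m with
  | zero => exact h
  | succ n ih => exact fire_mono G ih (f n)

lemma volatile_mono (G : SimpleGraph V) [DecidableRel G.Adj] {c c' : V → ℕ}
    (h : ∀ u, c' u ≤ c u) (hv : Volatile G c') : Volatile G c := by
  obtain ⟨f, hf⟩ := hv
  exact ⟨f, fun m => (hf m).trans (fireIter_mono G h f m (f m))⟩

lemma fireList_append (G : SimpleGraph V) [DecidableRel G.Adj] (c : V → ℕ)
    (l₁ l₂ : List V) : fireList G c (l₁ ++ l₂) = fireList G (fireList G c l₁) l₂ := by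
  induction l₁ generalizing c with
  | nil => rfl
  | cons v l ih => simp [fireList, ih]

lemma legalList_append (G : SimpleGraph V) [DecidableRel G.Adj] (c : V → ℕ)
    (l₁ l₂ : List V) (h₁ : LegalList G c l₁) (h₂ : LegalList G (fireList G c l₁) l₂) :
    LegalList G c (l₁ ++ l₂) := by
  induction l₁ generalizing c with
  | nil => exact h₂
  | cons v l ih => exact ⟨h₁.1, ih _ h₁.2 h₂⟩

noncomputable def seqAux (G : SimpleGraph V) [DecidableRel G.Adj] (c' : V → ℕ)
    (H : ∀ l, LegalList G c' l → ∃ v, G.degree v ≤ fireList G c' l v) :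
    ℕ → {l : List V // LegalList G c' l}
  | 0 => ⟨[], trivial⟩
  | n + 1 =>
    let p := seqAux G c' H n
    ⟨p.1 ++ [(H p.1 p.2).choose],
      legalList_append G c' p.1 _ p.2 ⟨(H p.1 p.2).choose_spec, trivial⟩⟩

/-- If `c` is not volatile and `c'` is obtained from `c` by removing chips,
then there is no infinite legal firing sequence from `c'`, and from `c'` one reaches a
stable configuration after finitely many firings. -/
theorem stmt18 (G : SimpleGraph V) [DecidableRel G.Adj] (c c' : V → ℕ)
    (hnvol : ¬ Volatile G c) (hle : ∀ v, c' v ≤ c v) :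
    ¬ Volatile G c' ∧
      ∃ l : List V, LegalList G c' l ∧ ∀ v, fireList G c' l v < G.degree v := by
  have hnvol' : ¬ Volatile G c' := fun hv => hnvol (volatile_mono G hle hv)
  refine ⟨hnvol', ?_⟩
  by_contra hno
  push_neg at hno
  have H : ∀ l, LegalList G c' l → ∃ v, G.degree v ≤ fireList G c' l v := by
    intro l hl
    obtain ⟨v, hv⟩ := hno l hl
    exact ⟨v, hv⟩
  set g := seqAux G c' H with hg
  set f : ℕ → V := fun n => (H (g n).1 (g n).2).choose with hf
  have key : ∀ m, fireIter G c' f m = fireList G c' (g m).1 := by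
    intro m
    induction m with
    | zero => rfl
    | succ n ih =>
      show fire G (fireIter G c' f n) (f n) = _
      rw [ih]
      have : (g (n+1)).1 = (g n).1 ++ [f n] := rfl
      rw [this, fireList_append]
      rfl
  apply hnvol'
  refine ⟨f, fun m => ?_⟩
  rw [key m]
  exact (H (g m).1 (g m).2).choose_spec
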